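/- Let A ∈ ℝ^{n×n} be a symmetric matrix with spectral norm ‖A‖₂ ≤ 1, let g ∈ ℝ^n, let k be a positive integer, and let 0 ≤ ε ≤ 1/(2k²). Let ξ_1, …, ξ_k ∈ ℝ^n and define ṽ_0 = g, ṽ_1 = A g − ξ_1, and ṽ_j = 2(A ṽ_{j−1} − ξ_j) − ṽ_{j−2} for 2 ≤ j ≤ k, and assume ‖ξ_j‖₂ ≤ ε·‖ṽ_{j−1}‖₂ for every 1 ≤ j ≤ k. Then ‖T_k(A)g − ṽ_k‖₂ ≤ 2ε(k+1)²·‖g‖₂, and consequently |gᵀ T_k(A) g − gᵀ ṽ_k| ≤ 2ε(k+1)²·‖g‖₂². -/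

import Mathlib

/-!
Put `e_j = T_j(A) g - ṽ_j`. Then `e_0 = 0`, `e_1 = ξ_1` and `e_j = 2 A e_{j-1} - e_{j-2} + 2 ξ_j`:
the error obeys the Chebyshev recurrence, driven by the perturbations. For symmetric `A` with
`‖A‖₂ ≤ 1` the quadratic form `Q(x, y) = ‖x‖² + ‖y‖² - 2⟪A x, y⟫` is positive semidefinite and
invariant under the unperturbed step `(x, y) ↦ (y, 2 A y - x)`. Hence `√Q(e_{j-1}, e_j)` grows by
at most `2‖ξ_j‖` per step while `‖e_j‖` grows by at most `√Q(e_{j-1}, e_j)`, so `‖ξ_i‖ ≤ η` for all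
`i ≤ j` gives `‖e_j‖ ≤ j² η`.

With `η = 2ε‖g‖` this bound sustains itself: `‖e_j‖ ≤ 2εk²‖g‖ ≤ ‖g‖`, and `‖T_j(A) g‖ ≤ ‖g‖` by
the Pell identity `T_j² + (1 - X²) U_{j-1}² = 1`, so `‖ṽ_j‖ ≤ 2‖g‖` and `‖ξ_{j+1}‖ ≤ 2ε‖g‖`.
-/

open Matrix

/-- `T_k(A)`: the `k`-th Chebyshev polynomial of the first kind applied to a matrix `A`. -/
noncomputable def chebTMat {n : ℕ} (A : Matrix (Fin n) (Fin n) ℝ) (k : ℕ) :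
    Matrix (Fin n) (Fin n) ℝ :=
  Polynomial.aeval A (Polynomial.Chebyshev.T ℝ (k : ℤ))

/-- The Euclidean norm of a vector in `ℝ^n`. -/
noncomputable def e2norm {n : ℕ} (v : Fin n → ℝ) : ℝ := Real.sqrt (∑ i, v i ^ 2)

open Polynomial Polynomial.Chebyshev
open scoped RealInnerProductSpace

namespace Polynomial.Chebyshev

theorem T_sq_add_one_sub_X_sq_mul_U_sq (R : Type*) [CommRing R] (n : ℤ) :
    T R n ^ 2 + (1 - X ^ 2) * U R (n - 1) ^ 2 = 1 := by
  induction n using Polynomial.Chebyshev.induct' with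
  | zero => simp
  | one => simp
  | add_two n ih _ =>
    have hT := T_eq_X_mul_T_sub_pol_U R n
    have hU := U_eq_X_mul_U_add_T R n
    rw [add_sub_cancel_right] at ih
    rw [show (n : ℤ) + 2 - 1 = n + 1 by ring]
    linear_combination (T R (n + 2) + X * T R (n + 1) - (1 - X ^ 2) * U R n) * hT +
      (1 - X ^ 2) * (U R (n + 1) + X * U R n + T R (n + 1)) * hU + ih
  | neg n ih => rwa [T_neg, U_neg_sub_one, neg_sq]

theorem aeval_T_add_two_apply {R E : Type*} [CommRing R] [AddCommGroup E] [Module R E]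
    (L : Module.End R E) (n : ℤ) (x : E) :
    aeval L (T R (n + 2)) x = (2 : R) • L (aeval L (T R (n + 1)) x) - aeval L (T R n) x := by
  rw [T_add_two]
  simp [Module.End.mul_apply, map_ofNat, two_smul]

end Polynomial.Chebyshev

namespace LinearMap.IsSymmetric

variable {E : Type*} [NormedAddCommGroup E] [InnerProductSpace ℝ E] {L : E →ₗ[ℝ] E}

protected theorem aeval (hL : L.IsSymmetric) (p : ℝ[X]) : (aeval L p).IsSymmetric := by
  rw [aeval_eq_sum_range]
  exact isSymmetric_sum _ fun i _ => (hL.pow i).smul (conj_trivial _)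

theorem norm_aeval_T_apply_le (hL : L.IsSymmetric) (hL1 : ∀ x, ‖L x‖ ≤ ‖x‖) (n : ℤ) (x : E) :
    ‖aeval L (T ℝ n) x‖ ≤ ‖x‖ := by
  set P := aeval L (T ℝ n)
  set Q := aeval L (U ℝ (n - 1))
  have hpell : P * P + Q * ((1 - L * L) * Q) = 1 := by
    have h := congrArg (aeval L) (T_sq_add_one_sub_X_sq_mul_U_sq ℝ n)
    rw [show T ℝ n ^ 2 + (1 - X ^ 2) * U ℝ (n - 1) ^ 2
      = T ℝ n * T ℝ n + U ℝ (n - 1) * ((1 - X * X) * U ℝ (n - 1)) by ring] at h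
    simpa using h
  have hdefect : 0 ≤ ⟪Q x, (1 - L * L) (Q x)⟫ := by
    have h : ⟪Q x, (1 - L * L) (Q x)⟫ = ‖Q x‖ ^ 2 - ‖L (Q x)‖ ^ 2 := by
      rw [LinearMap.sub_apply, inner_sub_right, Module.End.mul_apply, ← hL,
        Module.End.one_apply, real_inner_self_eq_norm_sq, real_inner_self_eq_norm_sq]
    rw [h, sub_nonneg]
    exact pow_le_pow_left₀ (norm_nonneg _) (hL1 _) 2
  have hnorm : ‖x‖ ^ 2 = ‖P x‖ ^ 2 + ⟪Q x, (1 - L * L) (Q x)⟫ := by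
    calc ‖x‖ ^ 2 = ⟪x, (P * P + Q * ((1 - L * L) * Q)) x⟫ := by
          rw [hpell, Module.End.one_apply, real_inner_self_eq_norm_sq]
      _ = ‖P x‖ ^ 2 + ⟪Q x, (1 - L * L) (Q x)⟫ := by
          rw [LinearMap.add_apply, inner_add_right, Module.End.mul_apply, Module.End.mul_apply,
            ← hL.aeval (T ℝ n) x, ← hL.aeval (U ℝ (n - 1)) x, real_inner_self_eq_norm_sq]
          rfl
  exact le_of_pow_le_pow_left₀ two_ne_zero (norm_nonneg x) (by linarith)

end LinearMap.IsSymmetric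

theorem Real.sqrt_add_sq_add_le {a b c : ℝ} (hb : 0 ≤ b) (hc : 0 ≤ c) :
    √((a + b) ^ 2 + c) ≤ √(a ^ 2 + c) + b := by
  have ha : a ≤ √(a ^ 2 + c) := Real.le_sqrt_of_sq_le (by linarith)
  rw [Real.sqrt_le_iff]
  refine ⟨by positivity, ?_⟩
  nlinarith [Real.sq_sqrt (by positivity : 0 ≤ a ^ 2 + c)]

section ChebyshevEnergy

variable {E : Type*} [NormedAddCommGroup E] [InnerProductSpace ℝ E] {L : E →ₗ[ℝ] E}

/-- For symmetric `L` this is `‖x‖² + ‖y‖² - 2⟪L x, y⟫`. -/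
def chebEnergy (L : E →ₗ[ℝ] E) (x y : E) : ℝ := ‖y - L x‖ ^ 2 + (‖x‖ ^ 2 - ‖L x‖ ^ 2)

theorem chebEnergy_cheb_step (hL : L.IsSymmetric) (x y : E) :
    chebEnergy L y ((2 : ℝ) • L y - x) = chebEnergy L x y := by
  simp only [chebEnergy, ← real_inner_self_eq_norm_sq, inner_sub_left, inner_sub_right,
    real_inner_smul_left, real_inner_smul_right, hL y x]
  rw [hL x y]
  ring

theorem norm_le_add_sqrt_chebEnergy (hL1 : ∀ x, ‖L x‖ ≤ ‖x‖) (x y : E) :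
    ‖y‖ ≤ ‖x‖ + √(chebEnergy L x y) := by
  have hdefect : 0 ≤ ‖x‖ ^ 2 - ‖L x‖ ^ 2 :=
    sub_nonneg.2 (pow_le_pow_left₀ (norm_nonneg _) (hL1 x) 2)
  calc ‖y‖ ≤ ‖L x‖ + ‖y - L x‖ := norm_le_insert' y (L x)
    _ ≤ ‖x‖ + √(chebEnergy L x y) := by
      gcongr
      · exact hL1 x
      · exact Real.le_sqrt_of_sq_le (by unfold chebEnergy; linarith)

theorem sqrt_chebEnergy_cheb_step_add_le (hL : L.IsSymmetric) (hL1 : ∀ x, ‖L x‖ ≤ ‖x‖)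
    (x y d : E) :
    √(chebEnergy L y ((2 : ℝ) • L y - x + d)) ≤ √(chebEnergy L x y) + ‖d‖ := by
  have hdefect : 0 ≤ ‖y‖ ^ 2 - ‖L y‖ ^ 2 :=
    sub_nonneg.2 (pow_le_pow_left₀ (norm_nonneg _) (hL1 y) 2)
  have hstep : (2 : ℝ) • L y - x - L y = L y - x := by module
  have hstep' : (2 : ℝ) • L y - x + d - L y = (L y - x) + d := by module
  calc √(chebEnergy L y ((2 : ℝ) • L y - x + d))
      ≤ √((‖L y - x‖ + ‖d‖) ^ 2 + (‖y‖ ^ 2 - ‖L y‖ ^ 2)) := by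
        unfold chebEnergy
        rw [hstep']
        gcongr
        exact norm_add_le _ _
    _ ≤ √(‖L y - x‖ ^ 2 + (‖y‖ ^ 2 - ‖L y‖ ^ 2)) + ‖d‖ :=
        Real.sqrt_add_sq_add_le (norm_nonneg d) hdefect
    _ = √(chebEnergy L x y) + ‖d‖ := by
        rw [← chebEnergy_cheb_step hL x y, chebEnergy, hstep]

variable {e ξ : ℕ → E} {η : ℝ}

theorem sqrt_chebEnergy_le_of_perturbed (hL : L.IsSymmetric) (hL1 : ∀ x, ‖L x‖ ≤ ‖x‖)
    (he0 : e 0 = 0) (he1 : e 1 = ξ 1) (j : ℕ)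
    (he : ∀ m, m + 2 ≤ j + 1 →
      e (m + 2) = (2 : ℝ) • L (e (m + 1)) - e m + (2 : ℝ) • ξ (m + 2))
    (hξ : ∀ i, 1 ≤ i → i ≤ j + 1 → ‖ξ i‖ ≤ η) :
    √(chebEnergy L (e j) (e (j + 1))) ≤ (2 * j + 1) * η := by
  induction j with
  | zero => simpa [chebEnergy, he0, he1] using hξ 1 le_rfl le_rfl
  | succ j ih =>
    rw [he j (by omega)]
    calc √(chebEnergy L (e (j + 1)) ((2 : ℝ) • L (e (j + 1)) - e j + (2 : ℝ) • ξ (j + 2)))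
        ≤ √(chebEnergy L (e j) (e (j + 1))) + ‖(2 : ℝ) • ξ (j + 2)‖ :=
          sqrt_chebEnergy_cheb_step_add_le hL hL1 _ _ _
      _ ≤ (2 * j + 1) * η + 2 * η := by
          rw [norm_smul, Real.norm_two]
          gcongr
          · exact ih (fun m hm => he m (by omega)) (fun i hi hij => hξ i hi (by omega))
          · exact hξ (j + 2) (by omega) le_rfl
      _ = (2 * ↑(j + 1) + 1) * η := by push_cast; ring

theorem norm_le_sq_mul_of_perturbed (hL : L.IsSymmetric) (hL1 : ∀ x, ‖L x‖ ≤ ‖x‖)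
    (he0 : e 0 = 0) (he1 : e 1 = ξ 1) (j : ℕ)
    (he : ∀ m, m + 2 ≤ j → e (m + 2) = (2 : ℝ) • L (e (m + 1)) - e m + (2 : ℝ) • ξ (m + 2))
    (hξ : ∀ i, 1 ≤ i → i ≤ j → ‖ξ i‖ ≤ η) :
    ‖e j‖ ≤ j ^ 2 * η := by
  induction j with
  | zero => simp [he0]
  | succ j ih =>
    calc ‖e (j + 1)‖ ≤ ‖e j‖ + √(chebEnergy L (e j) (e (j + 1))) :=
          norm_le_add_sqrt_chebEnergy hL1 _ _
      _ ≤ j ^ 2 * η + (2 * j + 1) * η := by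
          gcongr
          · exact ih (fun m hm => he m (by omega)) (fun i hi hij => hξ i hi (by omega))
          · exact sqrt_chebEnergy_le_of_perturbed hL hL1 he0 he1 j he hξ
      _ = ↑(j + 1) ^ 2 * η := by push_cast; ring

theorem norm_aeval_T_sub_perturbed_le (hL : L.IsSymmetric) (hL1 : ∀ x, ‖L x‖ ≤ ‖x‖)
    {g : E} {k : ℕ} {ε : ℝ} (hε0 : 0 ≤ ε) (hεk : 2 * ε * k ^ 2 ≤ 1) {v : ℕ → E}
    (hv0 : v 0 = g) (hv1 : v 1 = L g - ξ 1)
    (hv : ∀ m, m + 2 ≤ k → v (m + 2) = (2 : ℝ) • (L (v (m + 1)) - ξ (m + 2)) - v m)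
    (hξ : ∀ m, m + 1 ≤ k → ‖ξ (m + 1)‖ ≤ ε * ‖v m‖) :
    ‖aeval L (T ℝ k) g - v k‖ ≤ 2 * ε * k ^ 2 * ‖g‖ := by
  set e : ℕ → E := fun j => aeval L (T ℝ j) g - v j
  have he0 : e 0 = 0 := by simp [e, hv0]
  have he1 : e 1 = ξ 1 := by simp [e, hv1]
  have he : ∀ m, m + 2 ≤ k →
      e (m + 2) = (2 : ℝ) • L (e (m + 1)) - e m + (2 : ℝ) • ξ (m + 2) := by
    intro m hm
    simp only [e, hv m hm, Nat.cast_add, Nat.cast_ofNat, Nat.cast_one, aeval_T_add_two_apply,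
      map_sub]
    module
  have hξ_le : ∀ i, 1 ≤ i → i ≤ k → ‖ξ i‖ ≤ 2 * ε * ‖g‖ := by
    intro i
    induction i using Nat.strong_induction_on with
    | _ i ih =>
      intro hi hik
      obtain ⟨m, rfl⟩ : ∃ m, i = m + 1 := ⟨i - 1, by omega⟩
      have hem : ‖e m‖ ≤ ‖g‖ := calc
        ‖e m‖ ≤ m ^ 2 * (2 * ε * ‖g‖) :=
          norm_le_sq_mul_of_perturbed hL hL1 he0 he1 m (fun m' hm' => he m' (by omega))
            (fun i' hi' hi'm => ih i' (by omega) hi' (by omega))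
        _ ≤ k ^ 2 * (2 * ε * ‖g‖) := by gcongr; omega
        _ ≤ 1 * ‖g‖ := by rw [← mul_assoc]; gcongr; linarith
        _ = ‖g‖ := one_mul _
      have hvm : v m = aeval L (T ℝ m) g - e m := by simp [e]
      calc ‖ξ (m + 1)‖ ≤ ε * ‖v m‖ := hξ m hik
        _ ≤ ε * (‖aeval L (T ℝ m) g‖ + ‖e m‖) := by
          rw [hvm]
          gcongr
          exact norm_sub_le _ _
        _ ≤ ε * (‖g‖ + ‖g‖) := by gcongr; exact hL.norm_aeval_T_apply_le hL1 _ g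
        _ = 2 * ε * ‖g‖ := by ring
  calc ‖e k‖ ≤ k ^ 2 * (2 * ε * ‖g‖) := norm_le_sq_mul_of_perturbed hL hL1 he0 he1 k he hξ_le
    _ = 2 * ε * k ^ 2 * ‖g‖ := by ring

end ChebyshevEnergy

open WithLp

theorem e2norm_eq_norm_toLp {n : ℕ} (v : Fin n → ℝ) : e2norm v = ‖toLp 2 v‖ := by
  simp [e2norm, EuclideanSpace.norm_eq]

theorem abs_dotProduct_le_e2norm_mul {n : ℕ} (u w : Fin n → ℝ) :
    |u ⬝ᵥ w| ≤ e2norm u * e2norm w := by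
  rw [e2norm_eq_norm_toLp, e2norm_eq_norm_toLp, mul_comm]
  simpa [EuclideanSpace.inner_toLp_toLp] using abs_real_inner_le_norm (toLp 2 w) (toLp 2 u)

theorem toLp_chebTMat_mulVec {n : ℕ} (A : Matrix (Fin n) (Fin n) ℝ) (k : ℕ) (v : Fin n → ℝ) :
    toLp 2 (chebTMat A k *ᵥ v) = aeval (toEuclideanLin A) (T ℝ k) (toLp 2 v) := by
  have h : aeval (toEuclideanLin A) (T ℝ k) = toEuclideanLin (aeval A (T ℝ k)) :=
    aeval_algHom_apply (toLpLinAlgEquiv 2 (R := ℝ) (n := Fin n)).toAlgHom A (T ℝ k)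
  rw [h, chebTMat, toLpLin_toLp, toLin'_apply]

theorem cheb_recurrence_stability (n : ℕ) (A : Matrix (Fin n) (Fin n) ℝ)
    (hA : A.IsSymm) (hAnorm : ∀ v : Fin n → ℝ, e2norm (A.mulVec v) ≤ e2norm v)
    (g : Fin n → ℝ) (k : ℕ)
    (ε : ℝ) (hε0 : 0 ≤ ε) (hε1 : ε ≤ 1 / (2 * (k : ℝ) ^ 2))
    (ξ : ℕ → Fin n → ℝ) (vt : ℕ → Fin n → ℝ)
    (h0 : vt 0 = g)
    (h1 : vt 1 = A.mulVec g - ξ 1)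
    (hrec : ∀ j, 2 ≤ j → j ≤ k →
      vt j = (2 : ℝ) • (A.mulVec (vt (j - 1)) - ξ j) - vt (j - 2))
    (hξ : ∀ j, 1 ≤ j → j ≤ k → e2norm (ξ j) ≤ ε * e2norm (vt (j - 1))) :
    e2norm ((chebTMat A k).mulVec g - vt k) ≤ 2 * ε * ((k : ℝ) + 1) ^ 2 * e2norm g ∧
    |g ⬝ᵥ (chebTMat A k).mulVec g - g ⬝ᵥ vt k| ≤
      2 * ε * ((k : ℝ) + 1) ^ 2 * e2norm g ^ 2 := by
  have hL : (toEuclideanLin A).IsSymmetric :=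
    isSymmetric_toEuclideanLin_iff.2 (isHermitian_iff_isSymm.2 hA)
  have hL1 (x : EuclideanSpace ℝ (Fin n)) : ‖toEuclideanLin A x‖ ≤ ‖x‖ := by
    have h := hAnorm (ofLp x)
    rwa [e2norm_eq_norm_toLp, e2norm_eq_norm_toLp, toLp_ofLp, ← toLpLin_apply] at h
  have hεk : 2 * ε * k ^ 2 ≤ 1 := calc
    2 * ε * k ^ 2 = (2 * (k : ℝ) ^ 2) * ε := by ring
    _ ≤ (2 * (k : ℝ) ^ 2) * (2 * (k : ℝ) ^ 2)⁻¹ := by rw [← one_div]; gcongr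
    _ ≤ 1 := mul_inv_le_one
  have herr : e2norm (chebTMat A k *ᵥ g - vt k) ≤ 2 * ε * ((k : ℝ) + 1) ^ 2 * e2norm g := by
    rw [e2norm_eq_norm_toLp, e2norm_eq_norm_toLp, toLp_sub, toLp_chebTMat_mulVec]
    refine (norm_aeval_T_sub_perturbed_le hL hL1 hε0 hεk (ξ := fun j => toLp 2 (ξ j))
      (v := fun j => toLp 2 (vt j)) (by simp [h0]) (by simp [h1])
      (fun m hm => by simpa using congrArg (toLp 2) (hrec (m + 2) (by omega) hm))
      (fun m hm => by simpa [e2norm_eq_norm_toLp] using hξ (m + 1) (by omega) hm)).trans ?_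
    gcongr
    linarith
  refine ⟨herr, ?_⟩
  rw [← dotProduct_sub]
  calc |g ⬝ᵥ (chebTMat A k *ᵥ g - vt k)| ≤ e2norm g * e2norm (chebTMat A k *ᵥ g - vt k) :=
        abs_dotProduct_le_e2norm_mul _ _
    _ ≤ e2norm g * (2 * ε * ((k : ℝ) + 1) ^ 2 * e2norm g) := by
        gcongr
        exact Real.sqrt_nonneg _
    _ = 2 * ε * ((k : ℝ) + 1) ^ 2 * e2norm g ^ 2 := by ring
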